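/- arXiv:1910.04039 — 2 statements merged into one kernel-verified Lean document; each statement's English description precedes it below -/
import Mathlib

section
/- Let n ≥ 2 and let 0 = i_0 < i_1 < ... < i_r < i_{r+1} = n be integers. Define the r×r tridiagonal matrix M with entries m_{kl} = 1/|i_l - i_k| if |k-l| = 1, m_{kk} = -(1/(i_k - i_{k-1}) + 1/(i_{k+1} - i_k)), and m_{kl} = 0 if |k-l| ≥ 2 (indices k,l from 1 to r). Define the r×r matrix G with entries g_{kl} = -(i_k/n)(n - i_l) for k ≤ l and g_{kl} = -(i_l/n)(n - i_k) for k ≥ l. Then M·G = I, i.e., G is the inverse of M. -/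
/-- The tridiagonal matrix `M` built from `0 = i_0 < i_1 < ... < i_{r+1} = n`
has inverse `G` with `g_{kl} = -(i_k/n)(n-i_l)` for `k ≤ l` and symmetric otherwise. -/
theorem stmt_3 (n r : ℕ) (hn : 2 ≤ n) (i : ℕ → ℤ)
    (hmono : ∀ k, k ≤ r → i k < i (k + 1)) (hi0 : i 0 = 0) (hir : i (r + 1) = n)
    (M G : Matrix (Fin r) (Fin r) ℚ)
    (hM : ∀ k l : Fin r, M k l =
      if (k : ℕ) = (l : ℕ) then
        -(1 / ((i ((k : ℕ) + 1) : ℚ) - (i (k : ℕ) : ℚ))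
          + 1 / ((i ((k : ℕ) + 2) : ℚ) - (i ((k : ℕ) + 1) : ℚ)))
      else if (k : ℕ) + 1 = (l : ℕ) ∨ (l : ℕ) + 1 = (k : ℕ) then
        1 / |(i ((l : ℕ) + 1) : ℚ) - (i ((k : ℕ) + 1) : ℚ)|
      else 0)
    (hG : ∀ k l : Fin r, G k l =
      if (k : ℕ) ≤ (l : ℕ) then
        -((i ((k : ℕ) + 1) : ℚ) / (n : ℚ)) * ((n : ℚ) - (i ((l : ℕ) + 1) : ℚ))
      else
        -((i ((l : ℕ) + 1) : ℚ) / (n : ℚ)) * ((n : ℚ) - (i ((k : ℕ) + 1) : ℚ))) :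
    M * G = 1 := by
  have hnQ : (n : ℚ) ≠ 0 := by
    have : (0:ℚ) < n := by exact_mod_cast Nat.lt_of_lt_of_le (by norm_num) hn
    linarith
  have hpos : ∀ j, j ≤ r → (0:ℚ) < ((i (j+1) : ℚ) - (i j : ℚ)) := by
    intro j hj
    have h1 := hmono j hj
    have h2 : ((i j : ℚ)) < ((i (j+1) : ℚ)) := by exact_mod_cast h1
    linarith
  ext k l
  rw [Matrix.mul_apply, Matrix.one_apply]
  set gg : ℕ → ℚ := fun m =>
    if m ≤ (l : ℕ) + 1 then -((i m : ℚ) / n) * ((n:ℚ) - (i ((l:ℕ)+1) : ℚ))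
    else -((i ((l:ℕ)+1) : ℚ) / n) * ((n:ℚ) - (i m : ℚ)) with hgg
  have hgg0 : gg 0 = 0 := by
    rw [hgg]
    simp [hi0]
  have hggtop : gg (r+1) = 0 := by
    have h1 : ¬ (r + 1 ≤ (l:ℕ) + 1) := by have := l.isLt; omega
    have h2 : ((i (r+1) : ℤ) : ℚ) = (n:ℚ) := by rw [hir]; push_cast; ring
    rw [hgg]
    simp only [h1, if_false, h2]
    ring
  have hGgg : ∀ m : Fin r, G m l = gg ((m:ℕ)+1) := by
    intro m
    rw [hG]; simp only [hgg]
    by_cases h : (m:ℕ) ≤ (l:ℕ)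
    · rw [if_pos h, if_pos (by omega)]
    · rw [if_neg h, if_neg (by omega)]
  have hsplit : ∀ m : Fin r, M k m * G m l =
      (if m = k then M k m * G m l else 0)
      + (if (m:ℕ) = (k:ℕ) + 1 then M k m * G m l else 0)
      + (if (m:ℕ) + 1 = (k:ℕ) then M k m * G m l else 0) := by
    intro m
    by_cases h1 : m = k
    · have hv : (m:ℕ) = (k:ℕ) := by rw [h1]
      rw [if_pos h1, if_neg (by omega), if_neg (by omega)]; ring
    · have hne : (m:ℕ) ≠ (k:ℕ) := fun h => h1 (Fin.ext h)
      rw [if_neg h1]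
      by_cases h2 : (m:ℕ) = (k:ℕ) + 1
      · rw [if_pos h2, if_neg (by omega)]; ring
      · rw [if_neg h2]
        by_cases h3 : (m:ℕ) + 1 = (k:ℕ)
        · rw [if_pos h3]; ring
        · rw [if_neg h3]
          have hM0 : M k m = 0 := by
            rw [hM, if_neg (by omega), if_neg (by omega)]
          rw [hM0]; ring
  rw [Finset.sum_congr rfl (fun m _ => hsplit m), Finset.sum_add_distrib,
    Finset.sum_add_distrib]
  have h1sum : (∑ m : Fin r, if m = k then M k m * G m l else 0) = M k k * G k l := by
    rw [Finset.sum_ite_eq' Finset.univ k (fun m => M k m * G m l), if_pos (Finset.mem_univ k)]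
  have h2sum : (∑ m : Fin r, if (m:ℕ) = (k:ℕ) + 1 then M k m * G m l else 0)
      = (1 / ((i ((k:ℕ)+2) : ℚ) - (i ((k:ℕ)+1) : ℚ))) * gg ((k:ℕ)+2) := by
    by_cases h : (k:ℕ) + 1 < r
    · rw [Finset.sum_eq_single (⟨(k:ℕ)+1, h⟩ : Fin r)]
      · rw [if_pos rfl, hM, hGgg]
        have hv : ((⟨(k:ℕ)+1, h⟩ : Fin r) : ℕ) = (k:ℕ) + 1 := rfl
        rw [hv]
        rw [if_neg (by omega), if_pos (Or.inl rfl)]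
        have habs : |(i ((k:ℕ)+1+1) : ℚ) - (i ((k:ℕ)+1) : ℚ)|
            = (i ((k:ℕ)+1+1) : ℚ) - (i ((k:ℕ)+1) : ℚ) :=
          abs_of_pos (hpos ((k:ℕ)+1) (by omega))
        rw [habs]
      · intro b _ hb
        rw [if_neg]
        intro h'
        exact hb (Fin.ext h')
      · intro hk; exact absurd (Finset.mem_univ _) hk
    · have hKr : (k:ℕ) + 1 = r := by have := k.isLt; omega
      have hz : gg ((k:ℕ)+2) = 0 := by rw [show (k:ℕ)+2 = r+1 by omega]; exact hggtop
      rw [hz, mul_zero]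
      apply Finset.sum_eq_zero
      intro b _
      rw [if_neg]
      have := b.isLt; omega
  have h3sum : (∑ m : Fin r, if (m:ℕ) + 1 = (k:ℕ) then M k m * G m l else 0)
      = (1 / ((i ((k:ℕ)+1) : ℚ) - (i (k:ℕ) : ℚ))) * gg (k:ℕ) := by
    by_cases h : 0 < (k:ℕ)
    · have hlt : (k:ℕ) - 1 < r := by have := k.isLt; omega
      rw [Finset.sum_eq_single (⟨(k:ℕ)-1, hlt⟩ : Fin r)]
      · have hv : ((⟨(k:ℕ)-1, hlt⟩ : Fin r) : ℕ) = (k:ℕ) - 1 := rfl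
        rw [if_pos (by rw [hv]; omega), hM, hGgg, hv]
        rw [if_neg (by omega), if_pos (Or.inr (by omega))]
        have e : (k:ℕ) - 1 + 1 = (k:ℕ) := by omega
        rw [e]
        have habs : |(i (k:ℕ) : ℚ) - (i ((k:ℕ)+1) : ℚ)|
            = (i ((k:ℕ)+1) : ℚ) - (i (k:ℕ) : ℚ) := by
          rw [abs_sub_comm]
          exact abs_of_pos (hpos (k:ℕ) (le_of_lt k.isLt))
        rw [habs]
      · intro b _ hb
        rw [if_neg]
        intro h'
        exact hb (Fin.ext (by show (b:ℕ) = (k:ℕ) - 1; omega))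
      · intro hk; exact absurd (Finset.mem_univ _) hk
    · have hK0 : (k:ℕ) = 0 := by omega
      have hz : gg (k:ℕ) = 0 := by rw [hK0]; exact hgg0
      rw [hz, mul_zero]
      apply Finset.sum_eq_zero
      intro b _
      rw [if_neg]
      omega
  rw [h1sum, h2sum, h3sum, hGgg k, hM k k, if_pos rfl]
  have hd1 : ((i ((k:ℕ)+1) : ℚ) - (i (k:ℕ) : ℚ)) ≠ 0 :=
    ne_of_gt (hpos (k:ℕ) (le_of_lt k.isLt))
  have hd2 : ((i ((k:ℕ)+2) : ℚ) - (i ((k:ℕ)+1) : ℚ)) ≠ 0 := by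
    have e : (k:ℕ) + 2 = ((k:ℕ)+1) + 1 := by omega
    rw [e]
    exact ne_of_gt (hpos ((k:ℕ)+1) k.isLt)
  have hif : (if k = l then (1:ℚ) else 0) = (if (k:ℕ) = (l:ℕ) then 1 else 0) := by
    simp [Fin.ext_iff]
  rw [hif]
  rcases lt_trichotomy (k:ℕ) (l:ℕ) with h | h | h
  · rw [if_neg (by omega)]
    have e1 : gg ((k:ℕ)+1) = -((i ((k:ℕ)+1) : ℚ) / n) * ((n:ℚ) - (i ((l:ℕ)+1) : ℚ)) := by
      simp only [hgg]; exact if_pos (by omega)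
    have e2 : gg ((k:ℕ)+2) = -((i ((k:ℕ)+2) : ℚ) / n) * ((n:ℚ) - (i ((l:ℕ)+1) : ℚ)) := by
      simp only [hgg]; exact if_pos (by omega)
    have e3 : gg (k:ℕ) = -((i (k:ℕ) : ℚ) / n) * ((n:ℚ) - (i ((l:ℕ)+1) : ℚ)) := by
      simp only [hgg]; exact if_pos (by omega)
    rw [e1, e2, e3]
    field_simp
    ring
  · rw [if_pos h]
    have e1 : gg ((k:ℕ)+1) = -((i ((k:ℕ)+1) : ℚ) / n) * ((n:ℚ) - (i ((l:ℕ)+1) : ℚ)) := by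
      simp only [hgg]; exact if_pos (by omega)
    have e2 : gg ((k:ℕ)+2) = -((i ((l:ℕ)+1) : ℚ) / n) * ((n:ℚ) - (i ((k:ℕ)+2) : ℚ)) := by
      simp only [hgg]; exact if_neg (by omega)
    have e3 : gg (k:ℕ) = -((i (k:ℕ) : ℚ) / n) * ((n:ℚ) - (i ((l:ℕ)+1) : ℚ)) := by
      simp only [hgg]; exact if_pos (by omega)
    rw [e1, e2, e3, ← h]
    field_simp
    ring
  · rw [if_neg (by omega)]
    have e1 : gg ((k:ℕ)+1) = -((i ((l:ℕ)+1) : ℚ) / n) * ((n:ℚ) - (i ((k:ℕ)+1) : ℚ)) := by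
      simp only [hgg]; exact if_neg (by omega)
    have e2 : gg ((k:ℕ)+2) = -((i ((l:ℕ)+1) : ℚ) / n) * ((n:ℚ) - (i ((k:ℕ)+2) : ℚ)) := by
      simp only [hgg]; exact if_neg (by omega)
    have e3 : gg (k:ℕ) = -((i ((l:ℕ)+1) : ℚ) / n) * ((n:ℚ) - (i (k:ℕ) : ℚ)) := by
      simp only [hgg]
      by_cases hc : (k:ℕ) ≤ (l:ℕ) + 1
      · have hk1 : (k:ℕ) = (l:ℕ) + 1 := by omega
        rw [if_pos hc, hk1]
      · rw [if_neg hc]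
    rw [e1, e2, e3]
    field_simp
    ring
end

section
/- Let n ≥ 2 and let 0 = i_0 < i_1 < ... < i_r < i_{r+1} = n be integers, and let M be the tridiagonal matrix with m_{kl} = 1/|i_l - i_k| for |k-l|=1, m_{kk} = -(1/(i_k-i_{k-1}) + 1/(i_{k+1}-i_k)), m_{kl}=0 otherwise. Then M is invertible (has nonzero determinant). -/
/-- The tridiagonal matrix `M` built from `0 = i_0 < i_1 < ... < i_{r+1} = n`
is invertible. -/
theorem stmt_4 (n r : ℕ) (hn : 2 ≤ n) (i : ℕ → ℤ)
    (hmono : ∀ k, k ≤ r → i k < i (k + 1)) (hi0 : i 0 = 0) (hir : i (r + 1) = n)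
    (M : Matrix (Fin r) (Fin r) ℝ)
    (hM : ∀ k l : Fin r, M k l =
      if (k : ℕ) = (l : ℕ) then
        -(1 / ((i ((k : ℕ) + 1) : ℝ) - (i (k : ℕ) : ℝ))
          + 1 / ((i ((k : ℕ) + 2) : ℝ) - (i ((k : ℕ) + 1) : ℝ)))
      else if (k : ℕ) + 1 = (l : ℕ) ∨ (l : ℕ) + 1 = (k : ℕ) then
        1 / |(i ((l : ℕ) + 1) : ℝ) - (i ((k : ℕ) + 1) : ℝ)|
      else 0) :
    M.det ≠ 0 := by
  have hmono' : ∀ a b : ℕ, a < b → b ≤ r + 1 → i a < i b := by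
    intro a b hab hb
    induction b with
    | zero => omega
    | succ m ih =>
      rcases Nat.lt_succ_iff_lt_or_eq.mp hab with h | h
      · exact lt_trans (ih h (by omega)) (hmono m (by omega))
      · subst h; exact hmono a (by omega)
  have hdZ : ∀ j : ℕ, j ≤ r → ((i j : ℝ)) < ((i (j+1) : ℝ)) := by
    intro j hj
    exact_mod_cast hmono j hj
  set w : ℕ → ℝ := fun j => (i j : ℝ) * ((n:ℝ) - (i j : ℝ)) with hwdef
  have hw0 : w 0 = 0 := by simp [hwdef, hi0]
  have hwr : w (r+1) = 0 := by simp [hwdef, hir]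
  have hwpos : ∀ j : ℕ, 1 ≤ j → j ≤ r → 0 < w j := by
    intro j h1 h2
    have ha : (0:ℤ) < i j := by
      have := hmono' 0 j h1 (by omega); omega
    have hb : i j < (n:ℤ) := by
      have := hmono' j (r+1) (by omega) le_rfl; omega
    have ha' : (0:ℝ) < (i j : ℝ) := by exact_mod_cast ha
    have hb' : ((i j : ℝ)) < (n:ℝ) := by exact_mod_cast hb
    exact mul_pos ha' (by linarith)
  set W : Fin r → ℝ := fun k => w ((k:ℕ)+1) with hWdef
  have hWpos : ∀ k : Fin r, 0 < W k := by
    intro k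
    exact hwpos _ (by omega) (by have := k.isLt; omega)
  set N : Matrix (Fin r) (Fin r) ℝ := fun k l => (W k)⁻¹ * M k l * W l with hNdef
  have hdet : N.det = M.det := by
    have hNeq : N = Matrix.diagonal (fun k => (W k)⁻¹) * M * Matrix.diagonal W := by
      ext k l
      simp [hNdef, Matrix.mul_diagonal, Matrix.diagonal_mul, mul_assoc]
    rw [hNeq, Matrix.det_mul, Matrix.det_mul, Matrix.det_diagonal, Matrix.det_diagonal,
      mul_right_comm, ← Finset.prod_mul_distrib,
      Finset.prod_eq_one (fun k _ => inv_mul_cancel₀ ((hWpos k).ne')), one_mul]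
  rw [← hdet]
  apply det_ne_zero_of_sum_row_lt_diag
  intro k
  have hK : (k:ℕ) < r := k.isLt
  have hab : ((i (k:ℕ) : ℝ)) < ((i ((k:ℕ)+1) : ℝ)) := hdZ _ (by omega)
  have hbc : ((i ((k:ℕ)+1) : ℝ)) < ((i ((k:ℕ)+2) : ℝ)) := hdZ _ (by omega)
  have hdk : (0:ℝ) < (i ((k:ℕ)+1) : ℝ) - (i (k:ℕ) : ℝ) := by linarith
  have hdk1 : (0:ℝ) < (i ((k:ℕ)+2) : ℝ) - (i ((k:ℕ)+1) : ℝ) := by linarith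
  -- diagonal entry
  have hnorm : ‖N k k‖ = 1 / ((i ((k:ℕ)+1) : ℝ) - (i (k:ℕ) : ℝ))
      + 1 / ((i ((k:ℕ)+2) : ℝ) - (i ((k:ℕ)+1) : ℝ)) := by
    have hNkk : N k k = -(1 / ((i ((k:ℕ)+1) : ℝ) - (i (k:ℕ) : ℝ))
        + 1 / ((i ((k:ℕ)+2) : ℝ) - (i ((k:ℕ)+1) : ℝ))) := by
      show (W k)⁻¹ * M k k * W k = _
      rw [hM k k, if_pos rfl, mul_comm ((W k)⁻¹) _, mul_assoc,
        inv_mul_cancel₀ (hWpos k).ne', mul_one]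
    rw [hNkk, Real.norm_eq_abs, abs_neg,
      abs_of_pos (add_pos (one_div_pos.mpr hdk) (one_div_pos.mpr hdk1))]
  -- off-diagonal entries
  have hoff : ∀ l : Fin r, l ≠ k → ‖N k l‖ =
      (if (l:ℕ)+1 = (k:ℕ) then (W k)⁻¹ * (1 / ((i ((k:ℕ)+1) : ℝ) - (i (k:ℕ) : ℝ))) * W l else 0)
      + (if (k:ℕ)+1 = (l:ℕ) then (W k)⁻¹ * (1 / ((i ((k:ℕ)+2) : ℝ) - (i ((k:ℕ)+1) : ℝ))) * W l else 0) := by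
    intro l hlk
    have hvlk : (k:ℕ) ≠ (l:ℕ) := fun h => hlk (Fin.ext h.symm)
    show ‖(W k)⁻¹ * M k l * W l‖ = _
    rw [hM k l, if_neg hvlk]
    by_cases h1 : (l:ℕ)+1 = (k:ℕ)
    · have h2 : ¬((k:ℕ)+1 = (l:ℕ)) := by omega
      rw [if_pos (Or.inr h1), if_pos h1, if_neg h2, add_zero]
      rw [h1, abs_sub_comm, abs_of_pos hdk, Real.norm_eq_abs]
      exact abs_of_nonneg (mul_nonneg (mul_nonneg (inv_nonneg.mpr (hWpos k).le)
        (one_div_nonneg.mpr hdk.le)) (hWpos l).le)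
    · by_cases h2 : (k:ℕ)+1 = (l:ℕ)
      · rw [if_pos (Or.inl h2), if_neg h1, if_pos h2, zero_add]
        rw [← h2, abs_of_pos hdk1, Real.norm_eq_abs]
        exact abs_of_nonneg (mul_nonneg (mul_nonneg (inv_nonneg.mpr (hWpos k).le)
          (one_div_nonneg.mpr hdk1.le)) (hWpos l).le)
      · rw [if_neg (by tauto), if_neg h1, if_neg h2, mul_zero, zero_mul, norm_zero, add_zero]
  -- sum of off-diagonal entries
  have hsum : ∑ l ∈ Finset.univ.erase k, ‖N k l‖ =
      (W k)⁻¹ * (1 / ((i ((k:ℕ)+1) : ℝ) - (i (k:ℕ) : ℝ))) * w (k:ℕ)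
      + (W k)⁻¹ * (1 / ((i ((k:ℕ)+2) : ℝ) - (i ((k:ℕ)+1) : ℝ))) * w ((k:ℕ)+2) := by
    rw [Finset.sum_congr rfl (fun l hl => hoff l (Finset.ne_of_mem_erase hl))]
    rw [Finset.sum_erase _ (by rw [if_neg (by omega), if_neg (by omega), add_zero])]
    rw [Finset.sum_add_distrib]
    congr 1
    · rcases Nat.eq_zero_or_pos (k:ℕ) with h0 | hpos
      · rw [Finset.sum_eq_zero (fun l _ => if_neg (by omega))]
        rw [h0, hw0, mul_zero]
      · rw [Finset.sum_eq_single (⟨(k:ℕ)-1, by omega⟩ : Fin r)]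
        · rw [if_pos (by simp; omega)]
          congr 1
          simp only [hWdef]
          congr 1
          omega
        · intro x _ hx
          apply if_neg
          intro h
          exact hx (Fin.ext (by simp; omega))
        · intro h; exact absurd (Finset.mem_univ _) h
    · rcases Nat.lt_or_ge ((k:ℕ)+1) r with hlt | hge
      · rw [Finset.sum_eq_single (⟨(k:ℕ)+1, hlt⟩ : Fin r)]
        · rw [if_pos (by simp)]
        · intro x _ hx
          apply if_neg
          intro h
          exact hx (Fin.ext (by simp; omega))
        · intro h; exact absurd (Finset.mem_univ _) h
      · have hkr : (k:ℕ)+1 = r := by omega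
        rw [Finset.sum_eq_zero (fun l _ => if_neg (by have := l.isLt; omega))]
        rw [show (k:ℕ)+2 = r+1 by omega, hwr, mul_zero]
  rw [hsum, hnorm]
  -- the key inequality
  have main : ∀ a b c nn : ℝ, a < b → b < c → 0 < b*(nn-b) →
      (b*(nn-b))⁻¹ * (1/(b-a)) * (a*(nn-a)) + (b*(nn-b))⁻¹ * (1/(c-b)) * (c*(nn-c))
        < 1/(b-a) + 1/(c-b) := by
    intro a b c nn hab hbc hb
    have h1 : (0:ℝ) < b - a := by linarith
    have h2 : (0:ℝ) < c - b := by linarith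
    have key : (1/(b-a) + 1/(c-b)) * (b*(nn-b))
        - ((1/(b-a)) * (a*(nn-a)) + (1/(c-b)) * (c*(nn-c))) = c - a := by
      field_simp
      ring
    have hrw : (b*(nn-b))⁻¹ * (1/(b-a)) * (a*(nn-a)) + (b*(nn-b))⁻¹ * (1/(c-b)) * (c*(nn-c))
        = ((1/(b-a)) * (a*(nn-a)) + (1/(c-b)) * (c*(nn-c))) / (b*(nn-b)) := by ring
    rw [hrw, div_lt_iff₀ hb]
    linarith
  have hwb : 0 < w ((k:ℕ)+1) := hwpos _ (by omega) (by omega)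
  have := main ((i (k:ℕ) : ℝ)) ((i ((k:ℕ)+1) : ℝ)) ((i ((k:ℕ)+2) : ℝ)) (n:ℝ) hab hbc
    (by simpa [hwdef] using hwb)
  simpa [hWdef, hwdef] using this
end
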